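/- Let V be a finite-dimensional vector space, W a finite increasing filtration on V, N : V → V nilpotent respecting W, and suppose the relative monodromy filtration W' of N relative to W exists. Then for each w ∈ ℤ and m ≥ 0 there is a direct sum decomposition gr^{W'}_{w+m} gr^W_w = A ⊕ B, where A is the kernel of N^{m+1} : gr^{W'}_{w+m} gr^W_w → gr^{W'}_{w-m-2} gr^W_w and B is the image of N : gr^{W'}_{w+m+2} gr^W_w → gr^{W'}_{w+m} gr^W_w. -/

import Mathlib

/-! The component of `x ∈ gr^{W'}_{w+m} gr^W_w` in the image of `N` is found by lifting
`N^{m+1} x ∈ gr^{W'}_{w-m-2} gr^W_w` along the isomorphism `N^{m+2}`; what remains is killed by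
`N^{m+1}`. Conversely, if `x = N c` with `N^{m+1} x = N^{m+2} c = 0`, injectivity of `N^{m+2}` on
`gr^{W'}_{w+m+2} gr^W_w` gives `c = 0`. -/

open Submodule

/-- `W` is a finite increasing filtration on `V`. -/
def IsIncrFiltration {E V : Type*} [Field E] [AddCommGroup V] [Module E V]
    (W : ℤ → Submodule E V) : Prop :=
  Monotone W ∧ (∃ a : ℤ, ∀ w ≤ a, W w = ⊥) ∧ (∃ b : ℤ, ∀ w : ℤ, b ≤ w → W w = ⊤)

/-- `W'` is the relative monodromy filtration of `N` with respect to `W`: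
`W'` is a finite increasing filtration, `N (W'_w) ⊆ W'_{w-2}`, and for all `w` and `m ≥ 0`
the map induced by `N^m` from `gr^{W'}_{w+m} gr^W_w` to `gr^{W'}_{w-m} gr^W_w` is an
isomorphism (expressed at the level of subspaces of `V`: the `k`-th piece of the filtration
induced by `W'` on `gr^W_w` is the image of `(W' k ⊓ W w) ⊔ W (w-1)`). -/
def IsRelMonodromy {E V : Type*} [Field E] [AddCommGroup V] [Module E V]
    (N : V →ₗ[E] V) (W W' : ℤ → Submodule E V) : Prop :=
  IsIncrFiltration W' ∧
  (∀ w : ℤ, (W' w).map N ≤ W' (w - 2)) ∧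
  (∀ (w : ℤ) (m : ℕ),
    -- injectivity of the induced map `N^m : gr^{W'}_{w+m} gr^W_w → gr^{W'}_{w-m} gr^W_w`
    (∀ x ∈ W' (w + (m : ℤ)) ⊓ W w,
        (N ^ m) x ∈ (W' (w - (m : ℤ) - 1) ⊓ W w) ⊔ W (w - 1) →
        x ∈ (W' (w + (m : ℤ) - 1) ⊓ W w) ⊔ W (w - 1)) ∧
    -- surjectivity of the induced map
    (∀ y ∈ W' (w - (m : ℤ)) ⊓ W w, ∃ x ∈ W' (w + (m : ℤ)) ⊓ W w,
        y - (N ^ m) x ∈ (W' (w - (m : ℤ) - 1) ⊓ W w) ⊔ W (w - 1)))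

section Shift

variable {R V : Type*} [Ring R] [AddCommGroup V] [Module R V] {N : V →ₗ[R] V}
  {W W' : ℤ → Submodule R V}

lemma pow_apply_mem_of_map_le_sub_two (hN' : ∀ k, (W' k).map N ≤ W' (k - 2)) (j : ℕ)
    {k : ℤ} {x : V} (hx : x ∈ W' k) : (N ^ j) x ∈ W' (k - 2 * j) := by
  induction j with
  | zero => simpa using hx
  | succ j ih =>
    rw [pow_succ', Module.End.mul_apply]
    convert hN' _ (mem_map_of_mem ih) using 2
    push_cast; ring

variable (hNW : ∀ w, (W w).map N ≤ W w) (hN' : ∀ k, (W' k).map N ≤ W' (k - 2))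
include hNW hN'

lemma pow_apply_mem_inf {j : ℕ} {k l w : ℤ} (hl : l = k - 2 * j) {x : V}
    (hx : x ∈ W' k ⊓ W w) : (N ^ j) x ∈ W' l ⊓ W w :=
  ⟨hl ▸ pow_apply_mem_of_map_le_sub_two hN' j hx.1,
    Module.End.pow_apply_mem_of_forall_mem j (fun _ hy ↦ hNW w (mem_map_of_mem hy)) _ hx.2⟩

lemma pow_apply_mem_inf_sup {j : ℕ} {k l w : ℤ} (hl : l = k - 2 * j) {x : V}
    (hx : x ∈ W' k ⊓ W w ⊔ W (w - 1)) : (N ^ j) x ∈ W' l ⊓ W w ⊔ W (w - 1) := by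
  obtain ⟨u, hu, v, hv, rfl⟩ := mem_sup.1 hx
  rw [map_add]
  exact add_mem_sup (pow_apply_mem_inf hNW hN' hl hu)
    (Module.End.pow_apply_mem_of_forall_mem j (fun _ hy ↦ hNW _ (mem_map_of_mem hy)) _ hv)

end Shift

section Decomposition

variable {E V : Type*} [Field E] [AddCommGroup V] [Module E V] {N : V →ₗ[E] V}
  {W W' : ℤ → Submodule E V}

theorem IsRelMonodromy.exists_primitive_add_map (h : IsRelMonodromy N W W')
    (hNW : ∀ w, (W w).map N ≤ W w) (w : ℤ) (m : ℕ) {x : V} (hx : x ∈ W' (w + m) ⊓ W w) :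
    ∃ a ∈ W' (w + m) ⊓ W w, ∃ c ∈ W' (w + m + 2) ⊓ W w,
      (N ^ (m + 1)) a ∈ W' (w - m - 3) ⊓ W w ⊔ W (w - 1) ∧
      x - a - N c ∈ W' (w + m - 1) ⊓ W w ⊔ W (w - 1) := by
  obtain ⟨-, hN', hiso⟩ := h
  have hNx : (N ^ (m + 1)) x ∈ W' (w - (m + 2 : ℕ)) ⊓ W w :=
    pow_apply_mem_inf hNW hN' (by push_cast; ring) hx
  obtain ⟨c, hc, hrem⟩ := (hiso w (m + 2)).2 _ hNx
  have hc : c ∈ W' (w + m + 2) ⊓ W w := by convert hc using 3; push_cast; ring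
  have hNc : (N ^ 1) c ∈ W' (w + m) ⊓ W w := pow_apply_mem_inf hNW hN' (by ring) hc
  rw [pow_one] at hNc
  refine ⟨x - N c, sub_mem hx hNc, c, hc, ?_, by simp⟩
  rw [map_sub, ← Module.End.mul_apply, ← pow_succ]
  convert hrem using 4
  push_cast; ring

theorem IsRelMonodromy.mem_of_primitive_of_sub_map_mem (h : IsRelMonodromy N W W')
    (hNW : ∀ w, (W w).map N ≤ W w) (w : ℤ) (m : ℕ) {x c : V}
    (hx : (N ^ (m + 1)) x ∈ W' (w - m - 3) ⊓ W w ⊔ W (w - 1))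
    (hc : c ∈ W' (w + m + 2) ⊓ W w) (hxc : x - N c ∈ W' (w + m - 1) ⊓ W w ⊔ W (w - 1)) :
    x ∈ W' (w + m - 1) ⊓ W w ⊔ W (w - 1) := by
  obtain ⟨-, hN', hiso⟩ := h
  have hNxc : (N ^ (m + 1)) (x - N c) ∈ W' (w - m - 3) ⊓ W w ⊔ W (w - 1) :=
    pow_apply_mem_inf_sup hNW hN' (by push_cast; ring) hxc
  have hNc : (N ^ (m + 2)) c ∈ W' (w - (m + 2 : ℕ) - 1) ⊓ W w ⊔ W (w - 1) := by
    have hsub := sub_mem hx hNxc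
    rw [map_sub, sub_sub_cancel, ← Module.End.mul_apply, ← pow_succ] at hsub
    convert hsub using 4
    push_cast; ring
  have hc_small : c ∈ W' (w + m + 1) ⊓ W w ⊔ W (w - 1) := by
    convert (hiso w (m + 2)).1 c (by convert hc using 3; push_cast; ring) hNc using 4
    push_cast; ring
  have hNc_small : (N ^ 1) c ∈ W' (w + m - 1) ⊓ W w ⊔ W (w - 1) :=
    pow_apply_mem_inf_sup hNW hN' (by ring) hc_small
  rw [pow_one] at hNc_small
  simpa using add_mem hxc hNc_small

end Decomposition

theorem primitive_decomposition_general
    {E V : Type*} [Field E] [AddCommGroup V] [Module E V]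
    (W W' : ℤ → Submodule E V) (N : V →ₗ[E] V)
    (hNW : ∀ w : ℤ, (W w).map N ≤ W w)
    (h : IsRelMonodromy N W W') (w : ℤ) (m : ℕ) :
    -- `A + B` is everything:
    (∀ x ∈ W' (w + (m : ℤ)) ⊓ W w,
      ∃ a ∈ W' (w + (m : ℤ)) ⊓ W w, ∃ c ∈ W' (w + (m : ℤ) + 2) ⊓ W w,
        (N ^ (m + 1)) a ∈ (W' (w - (m : ℤ) - 3) ⊓ W w) ⊔ W (w - 1) ∧
        x - a - N c ∈ (W' (w + (m : ℤ) - 1) ⊓ W w) ⊔ W (w - 1)) ∧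
    -- `A ∩ B = 0`:
    (∀ x ∈ W' (w + (m : ℤ)) ⊓ W w,
      (N ^ (m + 1)) x ∈ (W' (w - (m : ℤ) - 3) ⊓ W w) ⊔ W (w - 1) →
      (∃ c ∈ W' (w + (m : ℤ) + 2) ⊓ W w,
        x - N c ∈ (W' (w + (m : ℤ) - 1) ⊓ W w) ⊔ W (w - 1)) →
      x ∈ (W' (w + (m : ℤ) - 1) ⊓ W w) ⊔ W (w - 1)) :=
  ⟨fun _ hx ↦ h.exists_primitive_add_map hNW w m hx,
    fun _ _ hx ⟨_, hc, hxc⟩ ↦ h.mem_of_primitive_of_sub_map_mem hNW w m hx hc hxc⟩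

/-- The primitive decomposition `gr^{W'}_{w+m} gr^W_w = A ⊕ B`, where
`A` is the kernel of `N^{m+1} : gr^{W'}_{w+m} gr^W_w → gr^{W'}_{w-m-2} gr^W_w`
(the primitive component) and `B` is the image of
`N : gr^{W'}_{w+m+2} gr^W_w → gr^{W'}_{w+m} gr^W_w`.  All conditions are expressed at
the level of subspaces of `V`: an element of `gr^{W'}_k gr^W_w` is represented by an
element of `W' k ⊓ W w`, and it is zero iff the representative lies in
`(W' (k-1) ⊓ W w) ⊔ W (w-1)`. -/
theorem primitive_decomposition
    {E V : Type*} [Field E] [AddCommGroup V] [Module E V] [FiniteDimensional E V]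
    (W W' : ℤ → Submodule E V) (N : V →ₗ[E] V)
    (hW : IsIncrFiltration W) (hN : IsNilpotent N) (hNW : ∀ w : ℤ, (W w).map N ≤ W w)
    (h : IsRelMonodromy N W W') (w : ℤ) (m : ℕ) :
    -- `A + B` is everything:
    (∀ x ∈ W' (w + (m : ℤ)) ⊓ W w,
      ∃ a ∈ W' (w + (m : ℤ)) ⊓ W w, ∃ c ∈ W' (w + (m : ℤ) + 2) ⊓ W w,
        (N ^ (m + 1)) a ∈ (W' (w - (m : ℤ) - 3) ⊓ W w) ⊔ W (w - 1) ∧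
        x - a - N c ∈ (W' (w + (m : ℤ) - 1) ⊓ W w) ⊔ W (w - 1)) ∧
    -- `A ∩ B = 0`:
    (∀ x ∈ W' (w + (m : ℤ)) ⊓ W w,
      (N ^ (m + 1)) x ∈ (W' (w - (m : ℤ) - 3) ⊓ W w) ⊔ W (w - 1) →
      (∃ c ∈ W' (w + (m : ℤ) + 2) ⊓ W w,
        x - N c ∈ (W' (w + (m : ℤ) - 1) ⊓ W w) ⊔ W (w - 1)) →
      x ∈ (W' (w + (m : ℤ) - 1) ⊓ W w) ⊔ W (w - 1)) :=
  primitive_decomposition_general W W' N hNW h w m
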